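/- arXiv:2205.07361 — 4 statements merged into one kernel-verified Lean document; each statement's English description precedes it below -/
import Mathlib

section
/- There exist a constant C₂ > 0 and p₀ > 1 such that for all real p ≥ p₀, writing b_p = 2 log p + 2 d₀ log log p, one has G_h(b_p) ≥ C₂ (log p)^{h/2 − d₀ − 1} / p. -/
open MeasureTheory ProbabilityTheory Real Filter

/-- `G_h(t) = P(χ²_h ≥ t)`, the survival function of the chi-square distribution with `h`
degrees of freedom, i.e. of the Gamma distribution with shape `h/2` and rate `1/2`. -/
noncomputable def chiSqTail (h : ℕ) (t : ℝ) : ℝ :=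
  (ProbabilityTheory.gammaMeasure ((h : ℝ) / 2) (1 / 2) (Set.Ici t)).toReal

/-!
For shape `a ≥ 1` the Gamma density is at least `r^a / Γ(a) · t^(a-1) e^{-r(t+1)}` on the window
`[t, t + 1]`, so the tail beyond `t` is at least that much. At `t = b_p` with `a = h/2`, `r = 1/2`
one has `e^{-b_p/2} = (log p)^{-d₀} / p` exactly, and `b_p ≥ log p` for large `p` because
`log log p = o(log p)`; so `b_p^(a-1) ≥ (log p)^(a-1)` and the bound follows with
`C₂ = 2^{-h/2} e^{-1/2} / Γ(h/2)`.
-/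

lemma gammaPDFReal_ge_of_mem_Icc {a r t s x : ℝ} (ha : 1 ≤ a) (hr : 0 ≤ r) (ht : 0 ≤ t)
    (hx : x ∈ Set.Icc t s) :
    r ^ a / Gamma a * t ^ (a - 1) * exp (-(r * s)) ≤ gammaPDFReal a r x := by
  have hx0 : 0 ≤ x := ht.trans hx.1
  rw [gammaPDFReal, if_pos hx0]
  gcongr
  exacts [hx.1, hx.2]

lemma toReal_gammaMeasure_Ici_ge {a r t : ℝ} (ha : 1 ≤ a) (hr : 0 < r) (ht : 0 ≤ t) :
    r ^ a / Gamma a * t ^ (a - 1) * exp (-(r * (t + 1))) ≤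
      (gammaMeasure a r (Set.Ici t)).toReal := by
  have := isProbabilityMeasure_gammaMeasure (by linarith : 0 < a) hr
  rw [← ENNReal.toReal_ofReal (by positivity : 0 ≤ r ^ a / Gamma a * t ^ (a - 1) * _)]
  refine ENNReal.toReal_mono (measure_ne_top _ _) ?_
  rw [gammaMeasure, withDensity_apply _ measurableSet_Ici]
  calc ENNReal.ofReal (r ^ a / Gamma a * t ^ (a - 1) * exp (-(r * (t + 1))))
      = ∫⁻ _ in Set.Icc t (t + 1), ENNReal.ofReal
          (r ^ a / Gamma a * t ^ (a - 1) * exp (-(r * (t + 1)))) := by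
        simp [volume_Icc]
    _ ≤ ∫⁻ x in Set.Icc t (t + 1), gammaPDF a r x :=
        setLIntegral_mono (measurable_gammaPDFReal a r).ennreal_ofReal fun _ hx =>
          ENNReal.ofReal_le_ofReal (gammaPDFReal_ge_of_mem_Icc ha hr.le ht hx)
    _ ≤ ∫⁻ x in Set.Ici t, gammaPDF a r x := lintegral_mono_set fun _ hx => hx.1

lemma eventually_one_le_log_and_abs_mul_log_log_le (c : ℝ) :
    ∀ᶠ p in atTop, 1 ≤ log p ∧ |c * log (log p)| ≤ log p := by
  have hL : ∀ᶠ L in atTop, 1 ≤ L ∧ |c * log L| ≤ L := by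
    filter_upwards [eventually_ge_atTop 1,
      (isLittleO_log_id_atTop.const_mul_left c).bound one_pos] with L hL hbound
    refine ⟨hL, ?_⟩
    simpa [abs_of_pos (zero_lt_one.trans_le hL)] using hbound
  exact tendsto_log_atTop.eventually hL

/-- Lower chi-square tail bound at `b_p = 2 log p + 2 d₀ log log p`:
`G_h(b_p) ≥ C₂ (log p)^{h/2 − d₀ − 1} / p` for all large `p`. -/
theorem statement2 (h : ℕ) (hh : 2 ≤ h) (d₀ : ℝ) :
    ∃ C₂ > (0 : ℝ), ∃ p₀ > (1 : ℝ), ∀ p : ℝ, p₀ ≤ p →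
      C₂ * Real.log p ^ ((h : ℝ) / 2 - d₀ - 1) / p ≤
        chiSqTail h (2 * Real.log p + 2 * d₀ * Real.log (Real.log p)) := by
  have ha : 1 ≤ (h : ℝ) / 2 := by
    have : (2 : ℝ) ≤ h := by exact_mod_cast hh
    linarith
  set a : ℝ := (h : ℝ) / 2
  obtain ⟨P, hP⟩ := eventually_atTop.1 (eventually_one_le_log_and_abs_mul_log_log_le (2 * d₀))
  refine ⟨(1 / 2) ^ a / Gamma a * exp (-(1 / 2)), by positivity, max P 2,
    lt_of_lt_of_le one_lt_two (le_max_right _ _), fun p hp => ?_⟩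
  obtain ⟨hL, hlogL⟩ := hP p (le_of_max_le_left hp)
  have hp0 : 0 < p := by linarith [le_max_right P 2]
  have hL0 : 0 < log p := by linarith
  set b := 2 * log p + 2 * d₀ * log (log p)
  have hLb : log p ≤ b := by linarith [neg_abs_le (2 * d₀ * log (log p))]
  have hexp : exp (-(1 / 2 * (b + 1))) = exp (-(1 / 2)) * (log p ^ (-d₀) / p) := by
    rw [rpow_def_of_pos hL0, show -(1 / 2 * (b + 1)) = -(1 / 2) + log (log p) * -d₀ + -log p by
      ring, exp_add, exp_add, exp_neg (log p), exp_log hp0]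
    ring
  calc (1 / 2) ^ a / Gamma a * exp (-(1 / 2)) * log p ^ (a - d₀ - 1) / p
      = (1 / 2) ^ a / Gamma a * log p ^ (a - 1) * exp (-(1 / 2 * (b + 1))) := by
        rw [hexp, show a - d₀ - 1 = (a - 1) + -d₀ by ring, rpow_add hL0]
        ring
    _ ≤ (1 / 2) ^ a / Gamma a * b ^ (a - 1) * exp (-(1 / 2 * (b + 1))) := by gcongr
    _ ≤ chiSqTail h b := toReal_gammaMeasure_Ici_ge ha (by norm_num) (by linarith)
end

section
/- There exist a constant C > 0 and p₀ > 1 such that for all real p ≥ p₀, writing b_p = 2 log p + 2 d₀ log log p, one has b_p / (p · G_h(b_p)) ≤ C (log p)^{2 + d₀ − h/2}. Consequently, if 2 d₀ < h − 4, then (log log p) · b_p / (p · G_h(b_p)) → 0 as p → ∞. -/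
/-!
For shape `a ≥ 1` the Gamma tail at `t ≥ 0` is at least a constant times `t^(a-1) e^(-r t)`:
integrate the density over `[t, t + 1]`. Since `e^(b_p/2) = p (log p)^d₀` exactly, this gives
`b_p / (p G_h(b_p)) = O(b_p^(2-h/2) (log p)^d₀)`, and `b_p ~ 2 log p` turns the right-hand side
into `O((log p)^(2+d₀-h/2))`. When the exponent is negative the extra factor `log log p` is
absorbed, since `log x · x^e → 0`.
-/

open MeasureTheory ProbabilityTheory Real Filter

open Asymptotics Set

theorem exists_rpow_mul_exp_le_gammaMeasure_Ici {a r : ℝ} (ha : 1 ≤ a) (hr : 0 < r) :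
    ∃ c > 0, ∀ t, 0 ≤ t →
      c * t ^ (a - 1) * exp (-(r * t)) ≤ (gammaMeasure a r (Ici t)).toReal := by
  have hΓ : 0 < Gamma a := Gamma_pos_of_pos (by linarith)
  set c := r ^ a / Gamma a * exp (-r)
  refine ⟨c, by positivity, fun t ht ↦ ?_⟩
  have : IsProbabilityMeasure (gammaMeasure a r) :=
    isProbabilityMeasure_gammaMeasure (by linarith) hr
  rw [← ENNReal.ofReal_le_iff_le_toReal (measure_ne_top _ _), gammaMeasure,
    withDensity_apply _ measurableSet_Ici]
  set m := c * t ^ (a - 1) * exp (-(r * t))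
  have hpdf : ∀ x ∈ Icc t (t + 1), ENNReal.ofReal m ≤ gammaPDF a r x := by
    rintro x ⟨htx, hxt⟩
    rw [gammaPDF_of_nonneg (ht.trans htx)]
    refine ENNReal.ofReal_le_ofReal ?_
    have hexp : exp (-r) * exp (-(r * t)) ≤ exp (-(r * x)) := by
      rw [← exp_add]
      exact exp_le_exp.2 (by nlinarith)
    calc m = r ^ a / Gamma a * t ^ (a - 1) * (exp (-r) * exp (-(r * t))) := by ring
      _ ≤ r ^ a / Gamma a * x ^ (a - 1) * exp (-(r * x)) := by
        gcongr
        exact mul_nonneg (by positivity) (rpow_nonneg (ht.trans htx) _)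
  calc ENNReal.ofReal m = ∫⁻ _ in Icc t (t + 1), ENNReal.ofReal m := by simp [volume_Icc]
    _ ≤ ∫⁻ x in Icc t (t + 1), gammaPDF a r x :=
        setLIntegral_mono (measurable_gammaPDFReal a r).ennreal_ofReal hpdf
    _ ≤ ∫⁻ x in Ici t, gammaPDF a r x := lintegral_mono_set Icc_subset_Ici_self

theorem exists_rpow_mul_exp_le_chiSqTail {h : ℕ} (hh : 2 ≤ h) :
    ∃ c > 0, ∀ t, 0 ≤ t → c * t ^ ((h : ℝ) / 2 - 1) * exp (-t / 2) ≤ chiSqTail h t := by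
  obtain ⟨c, hc, hbound⟩ := exists_rpow_mul_exp_le_gammaMeasure_Ici (a := (h : ℝ) / 2)
    (r := 1 / 2) (by rw [le_div_iff₀ two_pos]; exact_mod_cast hh) one_half_pos
  refine ⟨c, hc, fun t ht ↦ ?_⟩
  simpa only [chiSqTail, neg_div, one_div_mul_eq_div] using hbound t ht

theorem div_mul_le_of_rpow_mul_exp_le {a c t q G : ℝ} (hc : 0 < c) (ht : 0 < t) (hq : 0 < q)
    (hG : c * t ^ (a - 1) * exp (-t / 2) ≤ G) :
    t / (q * G) ≤ t ^ (2 - a) * exp (t / 2) / (c * q) := by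
  have hsplit : t ^ (2 - a) = t / t ^ (a - 1) := by
    rw [eq_div_iff (by positivity), ← rpow_add ht]
    norm_num
  calc t / (q * G) ≤ t / (q * (c * t ^ (a - 1) * exp (-t / 2))) := by gcongr
    _ = t ^ (2 - a) * exp (t / 2) / (c * q) := by
      rw [hsplit, neg_div, exp_neg]
      field_simp

noncomputable def threshold (d₀ p : ℝ) : ℝ := 2 * log p + 2 * d₀ * log (log p)

theorem isEquivalent_threshold (d₀ : ℝ) : threshold d₀ ~[atTop] fun p ↦ 2 * log p := by
  have hsmall : (fun p ↦ 2 * d₀ * log (log p)) =o[atTop] fun p ↦ 2 * log p :=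
    ((isLittleO_log_id_atTop.comp_tendsto tendsto_log_atTop).const_mul_left _).const_mul_right
      two_ne_zero
  exact IsEquivalent.refl.add_isLittleO hsmall

theorem tendsto_threshold_atTop (d₀ : ℝ) : Tendsto (threshold d₀) atTop atTop :=
  (isEquivalent_threshold d₀).symm.tendsto_atTop (tendsto_log_atTop.const_mul_atTop two_pos)

theorem exp_threshold_div_two (d₀ : ℝ) {p : ℝ} (hp : 0 < p) (hL : 0 < log p) :
    exp (threshold d₀ p / 2) = p * log p ^ d₀ := by
  rw [threshold, rpow_def_of_pos hL, ← exp_log hp, ← exp_add, log_exp]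
  ring_nf

theorem isBigO_threshold_div_chiSqTail {h : ℕ} (hh : 2 ≤ h) (d₀ : ℝ) :
    (fun p ↦ threshold d₀ p / (p * chiSqTail h (threshold d₀ p))) =O[atTop]
      fun p ↦ log p ^ (2 + d₀ - (h : ℝ) / 2) := by
  obtain ⟨c, hc, htail⟩ := exists_rpow_mul_exp_le_chiSqTail hh
  set a : ℝ := (h : ℝ) / 2
  have hb_pos : ∀ᶠ p in atTop, 0 < threshold d₀ p :=
    (tendsto_threshold_atTop d₀).eventually_gt_atTop 0
  have hL_pos : ∀ᶠ p in atTop, 0 < log p := tendsto_log_atTop.eventually_gt_atTop 0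
  have hpow : (fun p ↦ threshold d₀ p ^ (2 - a)) =Θ[atTop] fun p ↦ log p ^ (2 - a) :=
    ((isEquivalent_threshold d₀).isTheta.trans
        (IsTheta.const_mul_left two_ne_zero (isTheta_refl _ _))).rpow
      (hb_pos.mono fun _ ↦ le_of_lt) (hL_pos.mono fun _ ↦ le_of_lt)
  have hbound : (fun p ↦ threshold d₀ p / (p * chiSqTail h (threshold d₀ p))) =O[atTop]
      fun p ↦ threshold d₀ p ^ (2 - a) * log p ^ d₀ := by
    refine IsBigO.of_bound c⁻¹ ?_
    filter_upwards [hb_pos, hL_pos, eventually_gt_atTop 0] with p hb hL hp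
    have hG := htail _ hb.le
    have hG_pos : 0 < chiSqTail h (threshold d₀ p) := lt_of_lt_of_le (by positivity) hG
    rw [norm_of_nonneg (by positivity), norm_of_nonneg (by positivity)]
    calc threshold d₀ p / (p * chiSqTail h (threshold d₀ p))
        ≤ threshold d₀ p ^ (2 - a) * exp (threshold d₀ p / 2) / (c * p) :=
          div_mul_le_of_rpow_mul_exp_le hc hb hp hG
      _ = c⁻¹ * (threshold d₀ p ^ (2 - a) * log p ^ d₀) := by
          rw [exp_threshold_div_two d₀ hp hL]
          field_simp
  refine hbound.trans ((hpow.isBigO.mul (isBigO_refl _ _)).congr' EventuallyEq.rfl ?_)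
  filter_upwards [hL_pos] with p hL
  rw [← rpow_add hL]
  ring_nf

theorem tendsto_log_mul_rpow_atTop {e : ℝ} (he : e < 0) :
    Tendsto (fun x ↦ log x * x ^ e) atTop (nhds 0) := by
  refine (isLittleO_log_rpow_atTop (neg_pos.2 he)).tendsto_div_nhds_zero.congr' ?_
  filter_upwards [eventually_gt_atTop 0] with x hx
  rw [rpow_neg hx.le, div_inv_eq_mul]

/-- With `b_p = 2 log p + 2 d₀ log log p`, one has
`b_p / (p G_h(b_p)) ≤ C (log p)^{2 + d₀ − h/2}` for all large `p`; consequently, if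
`2 d₀ < h − 4`, then `(log log p) ⬝ b_p / (p G_h(b_p)) → 0` as `p → ∞`. -/
theorem statement4 (h : ℕ) (hh : 2 ≤ h) (d₀ : ℝ) :
    (∃ C > (0 : ℝ), ∃ p₀ > (1 : ℝ), ∀ p : ℝ, p₀ ≤ p →
      (2 * Real.log p + 2 * d₀ * Real.log (Real.log p)) /
          (p * chiSqTail h (2 * Real.log p + 2 * d₀ * Real.log (Real.log p))) ≤
        C * Real.log p ^ (2 + d₀ - (h : ℝ) / 2)) ∧
    (2 * d₀ < (h : ℝ) - 4 →
      Tendsto (fun p : ℝ =>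
          Real.log (Real.log p) * (2 * Real.log p + 2 * d₀ * Real.log (Real.log p)) /
            (p * chiSqTail h (2 * Real.log p + 2 * d₀ * Real.log (Real.log p))))
        atTop (nhds 0)) := by
  have hO := isBigO_threshold_div_chiSqTail hh d₀
  refine ⟨?_, fun hd ↦ ?_⟩
  · obtain ⟨C, hC, hCO⟩ := hO.exists_pos
    obtain ⟨p₀, hp₀⟩ := eventually_atTop.1 (hCO.bound.and (eventually_ge_atTop 1))
    refine ⟨C, hC, max p₀ 2, by simp, fun p hp ↦ ?_⟩
    obtain ⟨hbound, hp1⟩ := hp₀ p (le_of_max_le_left hp)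
    rw [norm_of_nonneg (rpow_nonneg (log_nonneg hp1) _)] at hbound
    exact (le_norm_self _).trans hbound
  · have hmaj := (tendsto_log_mul_rpow_atTop (e := 2 + d₀ - (h : ℝ) / 2) (by linarith)).comp
      tendsto_log_atTop
    refine (((isBigO_refl _ _).mul hO).trans_tendsto hmaj).congr fun p ↦ ?_
    simp only [threshold, mul_div_assoc]
end

section
/- Let u, v ∈ ℝʰ and let A, B be real h×h matrices with B symmetric. Then | uᵀ A u − vᵀ B v | ≤ (max_{k,l} |B_{kl}|) ‖u − v‖₁² + 2 ‖B u‖_∞ ‖u − v‖₁ + ‖A − B‖₂ ‖u‖₁², where ‖·‖₁ and ‖·‖_∞ are the ℓ¹ and ℓ^∞ norms on ℝʰ and ‖A − B‖₂ is the spectral (ℓ² → ℓ² operator) norm of A − B. -/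
open Matrix
open scoped InnerProductSpace

/-!
Writing `w = u - v` and using the symmetry of `B`, the difference of the two quadratic forms is
`-wᵀBw + 2 wᵀBu + uᵀ(A - B)u`. The first two terms are bounded entrywise through the `ℓ¹`–`ℓ^∞`
duality, the last one through Cauchy–Schwarz and `‖u‖₂ ≤ ‖u‖₁`.
-/

theorem EuclideanSpace.norm_toLp_le_sum_norm {𝕜 ι : Type*} [RCLike 𝕜] [Fintype ι] (x : ι → 𝕜) :
    ‖WithLp.toLp 2 x‖ ≤ ∑ i, ‖x i‖ := by
  rw [EuclideanSpace.norm_eq]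
  exact Real.sqrt_le_iff.mpr ⟨by positivity,
    Finset.sum_sq_le_sq_sum_of_nonneg fun i _ => norm_nonneg (x i)⟩

namespace Matrix

variable {m n : Type*} [Fintype m] [Fintype n]

theorem IsSymm.dotProduct_mulVec_comm {R : Type*} [CommSemiring R] {B : Matrix n n R}
    (hB : B.IsSymm) (x y : n → R) : x ⬝ᵥ B *ᵥ y = y ⬝ᵥ B *ᵥ x := by
  simpa only [hB.eq] using dotProduct_transpose_mulVec B x y

theorem dotProduct_mulVec_sub_dotProduct_mulVec {R : Type*} [CommRing R] {B : Matrix n n R}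
    (hB : B.IsSymm) (A : Matrix n n R) (u v : n → R) :
    u ⬝ᵥ A *ᵥ u - v ⬝ᵥ B *ᵥ v =
      -((u - v) ⬝ᵥ B *ᵥ (u - v)) + 2 * ((u - v) ⬝ᵥ B *ᵥ u) + u ⬝ᵥ (A - B) *ᵥ u := by
  simp only [mulVec_sub, sub_mulVec, dotProduct_sub, sub_dotProduct,
    hB.dotProduct_mulVec_comm u v]
  ring

theorem abs_dotProduct_le_of_abs_le {x y : n → ℝ} {c : ℝ} (hy : ∀ k, |y k| ≤ c) :
    |x ⬝ᵥ y| ≤ (∑ k, |x k|) * c := by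
  calc |x ⬝ᵥ y| ≤ ∑ k, |x k| * |y k| := by
        simpa only [dotProduct, abs_mul] using Finset.abs_sum_le_sum_abs (fun k => x k * y k) .univ
    _ ≤ ∑ k, |x k| * c :=
        Finset.sum_le_sum fun k _ => mul_le_mul_of_nonneg_left (hy k) (abs_nonneg _)
    _ = (∑ k, |x k|) * c := by rw [Finset.sum_mul]

theorem abs_dotProduct_mulVec_le_of_abs_le {B : Matrix m n ℝ} {c : ℝ} (hB : ∀ k l, |B k l| ≤ c)
    (x : m → ℝ) (y : n → ℝ) :
    |x ⬝ᵥ B *ᵥ y| ≤ c * (∑ k, |x k|) * (∑ l, |y l|) := by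
  have hBy (k : m) : |(B *ᵥ y) k| ≤ (∑ l, |y l|) * c := by
    rw [mulVec, dotProduct_comm]
    exact abs_dotProduct_le_of_abs_le (hB k)
  calc |x ⬝ᵥ B *ᵥ y| ≤ (∑ k, |x k|) * ((∑ l, |y l|) * c) := abs_dotProduct_le_of_abs_le hBy
    _ = c * (∑ k, |x k|) * (∑ l, |y l|) := by ring

theorem abs_dotProduct_mulVec_le_opNorm_mul [DecidableEq n] (M : Matrix n n ℝ) (x y : n → ℝ) :
    |x ⬝ᵥ M *ᵥ y| ≤ ‖toEuclideanCLM (𝕜 := ℝ) M‖ * (∑ k, |x k|) * (∑ l, |y l|) := by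
  set T := toEuclideanCLM (𝕜 := ℝ) M
  have hnorm (z : n → ℝ) : ‖WithLp.toLp 2 z‖ ≤ ∑ k, |z k| := by
    simpa only [Real.norm_eq_abs] using EuclideanSpace.norm_toLp_le_sum_norm z
  calc |x ⬝ᵥ M *ᵥ y| = |⟪WithLp.toLp 2 x, T (WithLp.toLp 2 y)⟫_ℝ| := by
        rw [inner_toEuclideanCLM]
    _ ≤ ‖WithLp.toLp 2 x‖ * ‖T (WithLp.toLp 2 y)‖ := abs_real_inner_le_norm _ _
    _ ≤ ‖WithLp.toLp 2 x‖ * (‖T‖ * ‖WithLp.toLp 2 y‖) := by gcongr; exact T.le_opNorm _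
    _ ≤ (∑ k, |x k|) * (‖T‖ * ∑ l, |y l|) := by gcongr <;> exact hnorm _
    _ = ‖T‖ * (∑ k, |x k|) * (∑ l, |y l|) := by ring

end Matrix

theorem statement9_general (h : ℕ) (u v : Fin h → ℝ)
    (A B : Matrix (Fin h) (Fin h) ℝ) (hB : B.IsSymm) :
    |u ⬝ᵥ (A *ᵥ u) - v ⬝ᵥ (B *ᵥ v)| ≤
      (⨆ k, ⨆ l, |B k l|) * (∑ k, |u k - v k|) ^ 2
        + 2 * (⨆ k, |(B *ᵥ u) k|) * (∑ k, |u k - v k|)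
        + ‖Matrix.toEuclideanCLM (𝕜 := ℝ) (A - B)‖ * (∑ k, |u k|) ^ 2 := by
  have hBmax (k l : Fin h) : |B k l| ≤ ⨆ k, ⨆ l, |B k l| :=
    (le_ciSup (f := fun l => |B k l|) (Set.finite_range _).bddAbove l).trans
      (le_ciSup (f := fun k => ⨆ l, |B k l|) (Set.finite_range _).bddAbove k)
  have hBu (k : Fin h) : |(B *ᵥ u) k| ≤ ⨆ k, |(B *ᵥ u) k| :=
    le_ciSup (f := fun k => |(B *ᵥ u) k|) (Set.finite_range _).bddAbove k
  have hww := abs_dotProduct_mulVec_le_of_abs_le hBmax (u - v) (u - v)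
  have hwu := abs_dotProduct_le_of_abs_le (x := u - v) hBu
  have huu := abs_dotProduct_mulVec_le_opNorm_mul (A - B) u u
  simp only [Pi.sub_apply] at hww hwu
  rw [dotProduct_mulVec_sub_dotProduct_mulVec hB]
  refine (abs_add_three _ _ _).trans ?_
  rw [abs_neg, abs_mul, abs_two]
  linarith

/-- **Quadratic form perturbation bound**: for `u, v ∈ ℝʰ` and `h×h` matrices `A, B` with `B`
symmetric, `|uᵀAu − vᵀBv| ≤ (maxₖₗ |B_{kl}|) ‖u − v‖₁² + 2 ‖Bu‖_∞ ‖u − v‖₁ + ‖A − B‖₂ ‖u‖₁²`,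
where `‖A − B‖₂` is the spectral norm. -/
theorem statement9 (h : ℕ) (hh : 0 < h) (u v : Fin h → ℝ)
    (A B : Matrix (Fin h) (Fin h) ℝ) (hB : B.IsSymm) :
    |u ⬝ᵥ (A *ᵥ u) - v ⬝ᵥ (B *ᵥ v)| ≤
      (⨆ k, ⨆ l, |B k l|) * (∑ k, |u k - v k|) ^ 2
        + 2 * (⨆ k, |(B *ᵥ u) k|) * (∑ k, |u k - v k|)
        + ‖Matrix.toEuclideanCLM (𝕜 := ℝ) (A - B)‖ * (∑ k, |u k|) ^ 2 :=
  statement9_general h u v A B hB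
end

section
/- Let A be a real n×m matrix, y ∈ ℝⁿ, and λ > 0. If θ̂ ∈ ℝᵐ is a global minimizer of the Lasso objective θ ↦ (1/(2n)) ‖y − Aθ‖₂² + λ ‖θ‖₁, then the stationarity (KKT) bound ‖ (1/n) Aᵀ (y − A θ̂) ‖_∞ ≤ λ holds. -/
open Matrix

/-- **Lasso KKT/stationarity bound**: if `θ̂` globally minimizes
`θ ↦ (1/(2n)) ‖y − Aθ‖₂² + λ‖θ‖₁`, then `‖(1/n) Aᵀ(y − Aθ̂)‖_∞ ≤ λ`. -/
theorem statement12
    (n m : ℕ) (hn : 0 < n) (A : Matrix (Fin n) (Fin m) ℝ) (y : Fin n → ℝ)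
    (lam : ℝ) (hlam : 0 < lam) (θhat : Fin m → ℝ)
    (hmin : ∀ θ : Fin m → ℝ,
      (1 / (2 * (n : ℝ))) * ∑ i, (y i - (A *ᵥ θhat) i) ^ 2 + lam * ∑ j, |θhat j| ≤
        (1 / (2 * (n : ℝ))) * ∑ i, (y i - (A *ᵥ θ) i) ^ 2 + lam * ∑ j, |θ j|) :
    ∀ j, |(1 / (n : ℝ)) * (Aᵀ *ᵥ (y - A *ᵥ θhat)) j| ≤ lam := by
  intro j
  have hn' : (0:ℝ) < n := by exact_mod_cast hn
  set S : ℝ := ∑ i, A i j * (y i - (A *ᵥ θhat) i) with hS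
  set Q : ℝ := ∑ i, (A i j)^2 with hQ
  have hQ0 : 0 ≤ Q := Finset.sum_nonneg (fun i _ => sq_nonneg _)
  have hST : (Aᵀ *ᵥ (y - A *ᵥ θhat)) j = S := by
    simp [mulVec, dotProduct, transpose_apply, hS]
  have key : ∀ t : ℝ, t * S / n ≤ t^2 * Q / (2*n) + lam * |t| := by
    intro t
    have h := hmin (fun j' => θhat j' + if j' = j then t else 0)
    have hmv : ∀ i, (A *ᵥ fun j' => θhat j' + if j' = j then t else 0) i
        = (A *ᵥ θhat) i + t * A i j := by
      intro i
      simp [mulVec, dotProduct, mul_add, Finset.sum_add_distrib, mul_ite, mul_zero,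
        Finset.sum_ite_eq', mul_comm]
    have hsq : ∑ i, (y i - (A *ᵥ fun j' => θhat j' + if j' = j then t else 0) i)^2
        = ∑ i, (y i - (A *ᵥ θhat) i)^2 - 2*t*S + t^2*Q := by
      simp only [hmv, hS, hQ, Finset.mul_sum, ← Finset.sum_sub_distrib, ← Finset.sum_add_distrib]
      apply Finset.sum_congr rfl
      intro i _
      ring
    have habs : ∑ j', |θhat j' + if j' = j then t else 0| ≤ (∑ j', |θhat j'|) + |t| := by
      have h1 : ∀ j' ∈ Finset.univ, |θhat j' + if j' = j then t else 0|
          ≤ |θhat j'| + (if j' = j then |t| else 0) := by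
        intro j' _
        split
        · exact abs_add_le _ _
        · simp
      calc ∑ j', |θhat j' + if j' = j then t else 0|
          ≤ ∑ j', (|θhat j'| + if j' = j then |t| else 0) := Finset.sum_le_sum h1
        _ = (∑ j', |θhat j'|) + |t| := by
            rw [Finset.sum_add_distrib, Finset.sum_ite_eq']
            simp
    rw [hsq] at h
    have h2 := le_trans h (by nlinarith [habs] :
      (1 / (2 * (n : ℝ))) * (∑ i, (y i - (A *ᵥ θhat) i)^2 - 2*t*S + t^2*Q)
        + lam * ∑ j', |θhat j' + if j' = j then t else 0|
      ≤ (1 / (2 * (n : ℝ))) * (∑ i, (y i - (A *ᵥ θhat) i)^2 - 2*t*S + t^2*Q)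
        + lam * ((∑ j', |θhat j'|) + |t|))
    have e : (1 / (2 * (n : ℝ))) * (∑ i, (y i - (A *ᵥ θhat) i)^2 - 2*t*S + t^2*Q)
        = (1 / (2 * (n : ℝ))) * (∑ i, (y i - (A *ᵥ θhat) i)^2) - t*S/n + t^2*Q/(2*n) := by
      field_simp
    rw [e] at h2
    linarith
  rw [hST]
  have hgoal : |S| / n ≤ lam := by
    apply le_of_forall_pos_le_add
    intro ε hε
    set δ : ℝ := 2 * n * ε / (Q + 1) with hδ
    have hδ0 : 0 < δ := by positivity
    set t : ℝ := if 0 ≤ S then δ else -δ with ht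
    have h1 : t * S = δ * |S| := by
      rw [ht]; split
      · rw [abs_of_nonneg ‹_›]
      · rw [abs_of_neg (by linarith [not_le.mp ‹_›])]; ring
    have h2 : |t| = δ := by
      rw [ht]; split
      · exact abs_of_pos hδ0
      · rw [abs_neg]; exact abs_of_pos hδ0
    have h3 : t^2 = δ^2 := by rw [ht]; split <;> ring
    have hk := key t
    rw [h1, h2, h3] at hk
    have hδQ : δ * Q / (2*n) ≤ ε := by
      have e2 : δ * Q / (2*n) = ε * (Q / (Q+1)) := by
        rw [hδ]; field_simp
      have e3 : Q / (Q+1) ≤ 1 := by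
        rw [div_le_one (by positivity : (0:ℝ) < Q+1)]; linarith
      rw [e2]
      nlinarith
    -- hk : δ * |S| / n ≤ δ^2 * Q / (2*n) + lam * δ
    have hk' : δ * (|S| / n) ≤ δ * (δ * Q / (2*n) + lam) := by
      calc δ * (|S| / n) = δ * |S| / n := by ring
        _ ≤ δ^2 * Q / (2*n) + lam * δ := hk
        _ = δ * (δ * Q / (2*n) + lam) := by ring
    have : |S| / n ≤ δ * Q / (2*n) + lam := le_of_mul_le_mul_left hk' hδ0
    linarith
  calc |1 / (n:ℝ) * S| = |S| / n := by
        rw [abs_mul, abs_of_nonneg (by positivity : (0:ℝ) ≤ 1/(n:ℝ))]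
        ring
    _ ≤ lam := hgoal
end
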